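/- Let n ≥ 2 and let Δ be a triangulation of [n]. Let 𝒜_Δ be the ℚ-subalgebra of 𝒜_n generated by all x_{ij} (for all distinct i,j ∈ [n]) together with x_{ij}⁻¹ for (i,j) ∈ Δ, and let S be the multiplicative submonoid of 𝒜_Δ generated by all x_{ij}, distinct i,j ∈ [n]. Then 𝒜_n is the universal localization of 𝒜_Δ by S: every element of S is a unit of 𝒜_n, and for every ℚ-algebra B and every ℚ-algebra homomorphism φ: 𝒜_Δ → B such that φ(s) is a unit of B for every s ∈ S, there exists a unique ℚ-algebra homomorphism ψ: 𝒜_n → B whose restriction to 𝒜_Δ is φ. -/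

import Mathlib

/-!
A homomorphism `ψ : 𝒜_n → B` extending `φ` must send `x_{ij}` to the unit `a_{ij} = φ(x_{ij})`,
which gives uniqueness, and such a `ψ` exists iff the family `a` satisfies all triangle and
exchange relations. Inside `𝒜_Δ` only the relations whose inverted generators belong to `Δ` are
available: the triangle relations with a side in `Δ` and the exchange relations with diagonal in
`Δ`. In terms of the angles `T_i^{jk} = a_{ji}⁻¹ a_{jk} a_{ik}⁻¹` they read `T_i^{jk} = T_i^{kj}`
and `T_i^{jl} = T_i^{jk} + T_i^{kl}`.

These relations propagate from the edges of `Δ` to every chord `(j, k)` by induction on the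
number of edges of `Δ` that it crosses: `(j, k)` is a diagonal of a quadrilateral `j p k q` with
`(j, p), (j, q), (p, q) ∈ Δ` in which `(p, k)` and `(q, k)` cross fewer edges. The relations
along `(j, k)` follow from those along the other five chords by flipping the diagonal `(p, q)`
and by comparing angles at `p` or `q`; the key point is that both kinds of relations are
invariant under the gauge change `a_{xy} ↦ g_x a_{xy} h_y`, e.g. `a ↦ T_p`.
-/

open scoped Classical

noncomputable section

namespace NCPolygon

/-- Cyclic successor on `Fin n` (the vertices of the `n`-gon in cyclic order). -/
def csucc {n : ℕ} (i : Fin n) : Fin n :=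
  ⟨(i.1 + 1) % n, Nat.mod_lt _ (Nat.lt_of_le_of_lt (Nat.zero_le _) i.isLt)⟩

/-- Cyclic predecessor on `Fin n`. -/
def cpred {n : ℕ} (i : Fin n) : Fin n :=
  ⟨(i.1 + (n - 1)) % n, Nat.mod_lt _ (Nat.lt_of_le_of_lt (Nat.zero_le _) i.isLt)⟩

/-- A list of elements of `Fin n` is *cyclic* if its entries are distinct and some
cyclic rotation of it is strictly increasing. -/
def IsCyclicSeq {n : ℕ} (l : List (Fin n)) : Prop :=
  l.Nodup ∧ ∃ k : ℕ, (l.rotate k).Pairwise (· < ·)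

/-- The pair `(i,k)` crosses `(j,l)` iff `(i,j,k,l)` is cyclic. -/
def Crosses {n : ℕ} (p q : Fin n × Fin n) : Prop :=
  IsCyclicSeq [p.1, q.1, p.2, q.2]

def NonCrossing {n : ℕ} (Δ : Set (Fin n × Fin n)) : Prop :=
  (∀ p ∈ Δ, p.1 ≠ p.2) ∧ ∀ p ∈ Δ, ∀ q ∈ Δ, ¬ Crosses p q

/-- A triangulation of the `n`-gon: a maximal crossing-free set of (directed) chords. -/
def IsTriangulation {n : ℕ} (Δ : Set (Fin n × Fin n)) : Prop :=
  NonCrossing Δ ∧ ∀ Δ' : Set (Fin n × Fin n), NonCrossing Δ' → Δ ⊆ Δ' → Δ' = Δ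

/-! ### The noncommutative polygon algebra `𝒜_n` -/

abbrev OffD (n : ℕ) := {p : Fin n × Fin n // p.1 ≠ p.2}

abbrev AGen (n : ℕ) := OffD n ⊕ OffD n

def xF {n : ℕ} (i j : Fin n) : FreeAlgebra ℚ (AGen n) :=
  if h : i ≠ j then FreeAlgebra.ι ℚ (Sum.inl ⟨(i, j), h⟩) else 1

def xiF {n : ℕ} (i j : Fin n) : FreeAlgebra ℚ (AGen n) :=
  if h : i ≠ j then FreeAlgebra.ι ℚ (Sum.inr ⟨(i, j), h⟩) else 1

/-- The defining relations of `𝒜_n`: invertibility, triangle, and exchange relations. -/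
inductive ARel (n : ℕ) : FreeAlgebra ℚ (AGen n) → FreeAlgebra ℚ (AGen n) → Prop
  | mul_inv {i j : Fin n} (h : i ≠ j) : ARel n (xF i j * xiF i j) 1
  | inv_mul {i j : Fin n} (h : i ≠ j) : ARel n (xiF i j * xF i j) 1
  | triangle {i j k : Fin n} (hij : i ≠ j) (hik : i ≠ k) (hjk : j ≠ k) :
      ARel n (xF i j * xiF k j * xF k i) (xF i k * xiF j k * xF j i)
  | exchange {i j k l : Fin n} (h : IsCyclicSeq [i, j, k, l]) :
      ARel n (xF j l) (xF j k * xiF i k * xF i l + xF j i * xiF k i * xF k l)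

/-- The noncommutative `n`-gon algebra `𝒜_n`. -/
abbrev NCPoly (n : ℕ) := RingQuot (ARel n)

/-- The generator `x_{ij} ∈ 𝒜_n` (junk value `1` when `i = j`). -/
def X {n : ℕ} (i j : Fin n) : NCPoly n :=
  RingQuot.mkAlgHom ℚ (ARel n) (xF i j)

/-- The generator `x_{ij}⁻¹ ∈ 𝒜_n`. -/
def Xinv {n : ℕ} (i j : Fin n) : NCPoly n :=
  RingQuot.mkAlgHom ℚ (ARel n) (xiF i j)

/-- The noncommutative angle `T_i^{jk} = x_{ji}⁻¹ x_{jk} x_{ik}⁻¹ ∈ 𝒜_n`. -/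
def Tang {n : ℕ} (i j k : Fin n) : NCPoly n := Xinv j i * X j k * Xinv i k

/-! ### Triangle groups -/

def tF {n : ℕ} (Δ : Set (Fin n × Fin n)) (i j : Fin n) : FreeGroup Δ :=
  if h : (i, j) ∈ Δ then FreeGroup.of (⟨(i, j), h⟩ : Δ) else 1

/-- The triangle relations of the triangle group `𝕋_Δ`. -/
def triRels {n : ℕ} (Δ : Set (Fin n × Fin n)) : Set (FreeGroup Δ) :=
  { w | ∃ i j k : Fin n, i ≠ j ∧ i ≠ k ∧ j ≠ k ∧
      (i, j) ∈ Δ ∧ (j, i) ∈ Δ ∧ (i, k) ∈ Δ ∧ (k, i) ∈ Δ ∧ (j, k) ∈ Δ ∧ (k, j) ∈ Δ ∧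
      w = tF Δ i j * (tF Δ k j)⁻¹ * tF Δ k i *
        (tF Δ i k * (tF Δ j k)⁻¹ * tF Δ j i)⁻¹ }

/-- The triangle group `𝕋_Δ` of a triangulation `Δ`. -/
abbrev TriGroup {n : ℕ} (Δ : Set (Fin n × Fin n)) := PresentedGroup (triRels Δ)

/-- The generator `t_{ij} ∈ 𝕋_Δ` (junk value `1` when `(i,j) ∉ Δ`). -/
def tG {n : ℕ} (Δ : Set (Fin n × Fin n)) (i j : Fin n) : TriGroup Δ :=
  if h : (i, j) ∈ Δ then PresentedGroup.of (rels := triRels Δ) ⟨(i, j), h⟩ else 1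

/-! ### The big triangle group `𝕋_n` -/

def btF {n : ℕ} (i j : Fin n) : FreeGroup (OffD n) :=
  if h : i ≠ j then FreeGroup.of (⟨(i, j), h⟩ : OffD n) else 1

def bigRels (n : ℕ) : Set (FreeGroup (OffD n)) :=
  { w | ∃ i j k : Fin n, i ≠ j ∧ i ≠ k ∧ j ≠ k ∧
      w = btF i j * (btF k j)⁻¹ * btF k i * (btF i k * (btF j k)⁻¹ * btF j i)⁻¹ }

/-- The big triangle group `𝕋_n`. -/
abbrev BigTriGroup (n : ℕ) := PresentedGroup (bigRels n)

/-- The generator `t_{ij} ∈ 𝕋_n`. -/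
def bigT {n : ℕ} (i j : Fin n) : BigTriGroup n :=
  if h : i ≠ j then PresentedGroup.of (rels := bigRels n) ⟨(i, j), h⟩ else 1

/-! ### Distinguished subalgebras and subgroups -/

/-- `𝒜_Δ`: the subalgebra of `𝒜_n` generated by all `x_{ij}` together with the
`x_{ij}⁻¹` for `(i,j) ∈ Δ`. -/
def ADelta (n : ℕ) (Δ : Set (Fin n × Fin n)) : Subalgebra ℚ (NCPoly n) :=
  Algebra.adjoin ℚ
    ({a | ∃ i j : Fin n, i ≠ j ∧ a = X i j} ∪ {a | ∃ p ∈ Δ, a = Xinv p.1 p.2})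

/-- `𝒬_n`: the subalgebra of `𝒜_n` generated by the `y_{ij}^k = x_{ki}⁻¹ x_{kj}`. -/
def Qn (n : ℕ) : Subalgebra ℚ (NCPoly n) :=
  Algebra.adjoin ℚ
    {a : NCPoly n | ∃ i j k : Fin n, i ≠ j ∧ i ≠ k ∧ j ≠ k ∧ a = Xinv k i * X k j}

/-- `𝕌_Δ`: the subgroup of `𝕋_Δ` generated by the `u_{ij}^k = t_{ki}⁻¹ t_{kj}`. -/
def UDelta {n : ℕ} (Δ : Set (Fin n × Fin n)) : Subgroup (TriGroup Δ) :=
  Subgroup.closure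
    {g | ∃ i j k : Fin n, (k, i) ∈ Δ ∧ (k, j) ∈ Δ ∧ g = (tG Δ k i)⁻¹ * tG Δ k j}


universe u

section CyclicOrder

variable {n : ℕ}

def cycPos (a x : Fin n) : ℕ := ((x - a : Fin n) : ℕ)

lemma cycPos_eq (a x : Fin n) :
    cycPos a x = if a.1 ≤ x.1 then x.1 - a.1 else x.1 + n - a.1 := by
  unfold cycPos
  split_ifs with h
  · exact Fin.coe_sub_iff_le.mpr h
  · rw [Fin.coe_sub_iff_lt.mpr (by omega)]; omega

lemma cycPos_lt (a x : Fin n) : cycPos a x < n := (x - a).isLt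

@[simp] lemma cycPos_eq_zero_iff {a x : Fin n} : cycPos a x = 0 ↔ x = a := by
  rw [cycPos_eq, Fin.ext_iff]; have := x.isLt; split_ifs <;> omega

@[simp] lemma cycPos_self (a : Fin n) : cycPos a a = 0 := cycPos_eq_zero_iff.mpr rfl

lemma cycPos_injective (a : Fin n) : Function.Injective (cycPos a) := by
  intro x y h
  rw [cycPos_eq, cycPos_eq] at h
  have := x.isLt; have := y.isLt
  exact Fin.ext (by split_ifs at h <;> omega)

lemma cycPos_csucc (hn : 2 ≤ n) (a : Fin n) : cycPos a (csucc a) = 1 := by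
  rw [cycPos_eq, csucc]
  have := a.isLt
  rcases Nat.lt_or_ge (a.1 + 1) n with h | h
  · simp only [Nat.mod_eq_of_lt h]; split_ifs <;> omega
  · simp only [show a.1 + 1 = n by omega, Nat.mod_self]; split_ifs <;> omega

lemma cycPos_cpred (a : Fin n) : cycPos a (cpred a) = n - 1 := by
  rw [cycPos_eq, cpred]
  have := a.isLt
  rcases Nat.eq_zero_or_pos a.1 with h | h
  · simp only [h, zero_add, Nat.mod_eq_of_lt (show n - 1 < n by omega)]; split_ifs <;> omega
  · simp only [show a.1 + (n - 1) = a.1 - 1 + n by omega, Nat.add_mod_right,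
      Nat.mod_eq_of_lt (show a.1 - 1 < n by omega)]
    split_ifs <;> omega

lemma cycPos_rebase (j a x : Fin n) :
    cycPos a x = if cycPos j a ≤ cycPos j x then cycPos j x - cycPos j a
      else cycPos j x + n - cycPos j a := by
  have := a.isLt; have := x.isLt; have := j.isLt
  simp only [cycPos_eq]
  split_ifs <;> omega

lemma isCyclicSeq_four_iff_val {a b c d : Fin n} :
    IsCyclicSeq [a, b, c, d] ↔
      (a.1 < b.1 ∧ b.1 < c.1 ∧ c.1 < d.1) ∨ (b.1 < c.1 ∧ c.1 < d.1 ∧ d.1 < a.1) ∨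
      (c.1 < d.1 ∧ d.1 < a.1 ∧ a.1 < b.1) ∨ (d.1 < a.1 ∧ a.1 < b.1 ∧ b.1 < c.1) := by
  have rot (k : ℕ) : [a, b, c, d].rotate k = [a, b, c, d].rotate (k % 4) := by
    rw [← List.rotate_mod]; rfl
  constructor
  · rintro ⟨-, k, hk⟩
    rw [rot] at hk
    obtain h | h | h | h : k % 4 = 0 ∨ k % 4 = 1 ∨ k % 4 = 2 ∨ k % 4 = 3 := by omega
    all_goals simp [h, List.rotate] at hk; simp only [Fin.lt_def] at hk; omega
  · intro h
    refine ⟨by simp [Fin.ext_iff]; omega, ?_⟩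
    rcases h with h | h | h | h
    exacts [⟨0, by simp; simp only [Fin.lt_def]; omega⟩,
      ⟨1, by simp [List.rotate]; simp only [Fin.lt_def]; omega⟩,
      ⟨2, by simp [List.rotate]; simp only [Fin.lt_def]; omega⟩,
      ⟨3, by simp [List.rotate]; simp only [Fin.lt_def]; omega⟩]

lemma isCyclicSeq_four_iff (j : Fin n) {a b c d : Fin n} :
    IsCyclicSeq [a, b, c, d] ↔
      (cycPos j a < cycPos j b ∧ cycPos j b < cycPos j c ∧ cycPos j c < cycPos j d) ∨
      (cycPos j b < cycPos j c ∧ cycPos j c < cycPos j d ∧ cycPos j d < cycPos j a) ∨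
      (cycPos j c < cycPos j d ∧ cycPos j d < cycPos j a ∧ cycPos j a < cycPos j b) ∨
      (cycPos j d < cycPos j a ∧ cycPos j a < cycPos j b ∧ cycPos j b < cycPos j c) := by
  rw [isCyclicSeq_four_iff_val]
  have := a.isLt; have := b.isLt; have := c.isLt; have := d.isLt
  simp only [cycPos_eq]
  split_ifs <;> omega

lemma isCyclicSeq_four_iff_fst {a b c d : Fin n} :
    IsCyclicSeq [a, b, c, d] ↔
      0 < cycPos a b ∧ cycPos a b < cycPos a c ∧ cycPos a c < cycPos a d := by
  rw [isCyclicSeq_four_iff a, cycPos_self]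
  have := cycPos_lt a b; have := cycPos_lt a c; have := cycPos_lt a d
  omega

lemma isCyclicSeq_rotate {a b c d : Fin n} :
    IsCyclicSeq [b, c, d, a] ↔ IsCyclicSeq [a, b, c, d] := by
  rw [isCyclicSeq_four_iff_fst, isCyclicSeq_four_iff_fst, cycPos_rebase a b c,
    cycPos_rebase a b d, cycPos_rebase a b a, cycPos_self]
  have := cycPos_lt a b; have := cycPos_lt a c; have := cycPos_lt a d
  split_ifs <;> omega

end CyclicOrder

section Triangulation

variable {n : ℕ}

/-- Unlike `Crosses`, this does not depend on the orientations of the chords. -/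
def Interlaced (e c : Fin n × Fin n) : Prop := Crosses e c ∨ Crosses c e

lemma interlaced_comm {e c : Fin n × Fin n} : Interlaced e c ↔ Interlaced c e := or_comm

lemma interlaced_iff {u v b c : Fin n} :
    Interlaced (u, v) (b, c) ↔
      (0 < cycPos u b ∧ cycPos u b < cycPos u v ∧ cycPos u v < cycPos u c) ∨
      (0 < cycPos u c ∧ cycPos u c < cycPos u v ∧ cycPos u v < cycPos u b) := by
  rw [Interlaced, Crosses, Crosses, ← isCyclicSeq_rotate (a := b), isCyclicSeq_four_iff_fst,
    isCyclicSeq_four_iff_fst]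

lemma interlaced_swap_right {e c : Fin n × Fin n} : Interlaced e c.swap ↔ Interlaced e c := by
  rw [Interlaced, Interlaced, Crosses, Crosses, Crosses, Crosses, Prod.fst_swap, Prod.snd_swap,
    ← isCyclicSeq_rotate (a := c.1), isCyclicSeq_rotate (a := c.2), or_comm]

lemma interlaced_swap_left {e c : Fin n × Fin n} : Interlaced e.swap c ↔ Interlaced e c := by
  rw [interlaced_comm, interlaced_swap_right, interlaced_comm]

lemma not_interlaced_of_fst_eq_fst {e c : Fin n × Fin n} (h : e.1 = c.1) : ¬ Interlaced e c := by
  obtain ⟨u, v⟩ := e; obtain ⟨b, c⟩ := c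
  simp only at h; subst h
  rw [interlaced_iff, cycPos_self]
  omega

lemma interlaced_side_or_vertex (j : Fin n) {b c : Fin n} {f : Fin n × Fin n}
    (h : Interlaced f (b, c)) :
    Interlaced (j, b) f ∨ Interlaced (j, c) f ∨ f.1 = j ∨ f.2 = j := by
  rw [← cycPos_eq_zero_iff (a := j), ← cycPos_eq_zero_iff (a := j), interlaced_iff, interlaced_iff]
  simp only [Interlaced, Crosses, isCyclicSeq_four_iff j] at h
  omega

variable {Δ : Set (Fin n × Fin n)}

lemma IsTriangulation.fst_ne_snd (hΔ : IsTriangulation Δ) {e : Fin n × Fin n} (he : e ∈ Δ) :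
    e.1 ≠ e.2 :=
  hΔ.1.1 e he

lemma IsTriangulation.not_interlaced (hΔ : IsTriangulation Δ) {e f : Fin n × Fin n}
    (he : e ∈ Δ) (hf : f ∈ Δ) : ¬ Interlaced e f := by
  rintro (h | h)
  exacts [hΔ.1.2 e he f hf h, hΔ.1.2 f hf e he h]

lemma IsTriangulation.mem_of_forall_not_interlaced (hΔ : IsTriangulation Δ) {c : Fin n × Fin n}
    (hc : c.1 ≠ c.2) (h : ∀ f ∈ Δ, ¬ Interlaced f c) : c ∈ Δ := by
  have hins : NonCrossing (insert c Δ) := by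
    refine ⟨fun p hp => ?_, fun p hp q hq hpq => ?_⟩
    · rcases hp with rfl | hp
      exacts [hc, hΔ.fst_ne_snd hp]
    · rcases hp with rfl | hp <;> rcases hq with rfl | hq
      · exact not_interlaced_of_fst_eq_fst rfl (Or.inl hpq)
      · exact h q hq (Or.inr hpq)
      · exact h p hp (Or.inl hpq)
      · exact hΔ.1.2 p hp q hq hpq
  rw [← hΔ.2 _ hins (Set.subset_insert c Δ)]
  exact Set.mem_insert c Δ

lemma IsTriangulation.swap_mem (hΔ : IsTriangulation Δ) {e : Fin n × Fin n} (he : e ∈ Δ) :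
    e.swap ∈ Δ :=
  hΔ.mem_of_forall_not_interlaced (hΔ.fst_ne_snd he).symm fun _ hf h =>
    hΔ.not_interlaced hf he (interlaced_swap_right.mp h)

/-- Boundary edges cross nothing, as no vertex lies strictly between their endpoints. -/
lemma IsTriangulation.mem_of_cycPos_eq (hΔ : IsTriangulation Δ) {j t : Fin n}
    (ht : cycPos j t = 1 ∨ cycPos j t = n - 1) (htj : t ≠ j) : (j, t) ∈ Δ := by
  refine hΔ.mem_of_forall_not_interlaced (Ne.symm htj) fun f _ h => ?_
  have := cycPos_lt j f.1; have := cycPos_lt j f.2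
  rw [interlaced_comm, interlaced_iff] at h
  omega

lemma IsTriangulation.interlaced_of_fan (hΔ : IsTriangulation Δ) {j b c : Fin n}
    (hjb : (j, b) ∈ Δ) (hfan : ∀ t, (j, t) ∈ Δ → ¬ Interlaced (j, t) (b, c))
    {f : Fin n × Fin n} (hf : f ∈ Δ) (h : Interlaced f (b, c)) : Interlaced (j, c) f := by
  obtain ⟨u, v⟩ := f
  rcases interlaced_side_or_vertex j h with h' | h' | rfl | rfl
  · exact absurd h' (hΔ.not_interlaced hjb hf)
  · exact h'
  · exact absurd h (hfan v hf)
  · exact absurd (interlaced_swap_left.mpr h) (hfan u (hΔ.swap_mem hf))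

def crossingNumber (Δ : Set (Fin n × Fin n)) (c : Fin n × Fin n) : ℕ :=
  {e ∈ Δ | Interlaced e c}.ncard

lemma crossingNumber_swap (c : Fin n × Fin n) : crossingNumber Δ c.swap = crossingNumber Δ c := by
  simp only [crossingNumber, interlaced_swap_right]

lemma IsTriangulation.crossingNumber_lt (hΔ : IsTriangulation Δ) {j b c d : Fin n}
    (hjb : (j, b) ∈ Δ) (hfan : ∀ t, (j, t) ∈ Δ → ¬ Interlaced (j, t) (b, c))
    (hbd : (b, d) ∈ Δ) (hcross : Interlaced (b, d) (j, c)) :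
    crossingNumber Δ (b, c) < crossingNumber Δ (j, c) := by
  have hsub : {e ∈ Δ | Interlaced e (b, c)} ⊆ {e ∈ Δ | Interlaced e (j, c)} :=
    fun f ⟨hf, hfc⟩ => ⟨hf, interlaced_comm.mp (hΔ.interlaced_of_fan hjb hfan hf hfc)⟩
  refine Set.ncard_lt_ncard ((Set.ssubset_iff_of_subset hsub).mpr ?_) (Set.toFinite _)
  exact ⟨(b, d), ⟨hbd, hcross⟩,
    fun h => not_interlaced_of_fst_eq_fst (e := (b, d)) (c := (b, c)) rfl h.2⟩

/-- `p` and `q` are the neighbours of `j` in `Δ` that are consecutive around `j` and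
enclose `k`. -/
lemma IsTriangulation.exists_fan (hΔ : IsTriangulation Δ) {j k : Fin n} (hjk : j ≠ k)
    (hk : (j, k) ∉ Δ) :
    ∃ p q, (j, p) ∈ Δ ∧ (j, q) ∈ Δ ∧
      0 < cycPos j p ∧ cycPos j p < cycPos j k ∧ cycPos j k < cycPos j q ∧
      ∀ t, (j, t) ∈ Δ → ¬ (cycPos j p < cycPos j t ∧ cycPos j t < cycPos j q) := by
  have hn : 2 ≤ n := by have := Fin.val_ne_of_ne hjk; omega
  have hk0 : cycPos j k ≠ 0 := by simpa using hjk.symm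
  have hsucc := cycPos_csucc hn j
  have hpred := cycPos_cpred j
  have hjs : (j, csucc j) ∈ Δ :=
    hΔ.mem_of_cycPos_eq (.inl hsucc) (ne_of_apply_ne (cycPos j) (by simp [hsucc]))
  have hjp : (j, cpred j) ∈ Δ :=
    hΔ.mem_of_cycPos_eq (.inr hpred) (ne_of_apply_ne (cycPos j) (by simp [hpred]; omega))
  have hk1 : cycPos j k ≠ 1 := fun h => hk (cycPos_injective j (h.trans hsucc.symm) ▸ hjs)
  have hkn : cycPos j k ≠ n - 1 := fun h => hk (cycPos_injective j (h.trans hpred.symm) ▸ hjp)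
  have := cycPos_lt j k
  obtain ⟨p, hp, hpmax⟩ := Finset.exists_max_image
    (Finset.univ.filter fun t => (j, t) ∈ Δ ∧ 0 < cycPos j t ∧ cycPos j t < cycPos j k)
    (cycPos j) ⟨csucc j, Finset.mem_filter.mpr ⟨Finset.mem_univ _, hjs, by omega⟩⟩
  obtain ⟨q, hq, hqmin⟩ := Finset.exists_min_image
    (Finset.univ.filter fun t => (j, t) ∈ Δ ∧ cycPos j k < cycPos j t)
    (cycPos j) ⟨cpred j, Finset.mem_filter.mpr ⟨Finset.mem_univ _, hjp, by omega⟩⟩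
  simp only [Finset.mem_filter, Finset.mem_univ, true_and] at hp hq hpmax hqmin
  refine ⟨p, q, hp.1, hq.1, hp.2.1, hp.2.2, hq.2, fun t ht ⟨h1, h2⟩ => ?_⟩
  rcases lt_trichotomy (cycPos j t) (cycPos j k) with h | h | h
  · have := hpmax t ⟨ht, by omega, h⟩; omega
  · exact hk (cycPos_injective j h ▸ ht)
  · have := hqmin t ⟨ht, h⟩; omega

lemma IsTriangulation.exists_anchor (hΔ : IsTriangulation Δ) {j k : Fin n} (hjk : j ≠ k)
    (hk : (j, k) ∉ Δ) :
    ∃ p q, (j, p) ∈ Δ ∧ (j, q) ∈ Δ ∧ (p, q) ∈ Δ ∧ IsCyclicSeq [j, p, k, q] ∧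
      crossingNumber Δ (p, k) < crossingNumber Δ (j, k) ∧
      crossingNumber Δ (q, k) < crossingNumber Δ (j, k) := by
  obtain ⟨p, q, hjp, hjq, hp, hpk, hkq, hfan⟩ := hΔ.exists_fan hjk hk
  have hfan' (b c : Fin n) (hb : cycPos j p ≤ cycPos j b ∧ cycPos j b ≤ cycPos j q)
      (hc : cycPos j p ≤ cycPos j c ∧ cycPos j c ≤ cycPos j q) :
      ∀ t, (j, t) ∈ Δ → ¬ Interlaced (j, t) (b, c) := by
    intro t ht h
    rw [interlaced_iff] at h
    exact hfan t ht (by omega)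
  have hpq : (p, q) ∈ Δ :=
    hΔ.mem_of_forall_not_interlaced (show p ≠ q from ne_of_apply_ne (cycPos j) (by omega))
      fun f hf h =>
      hΔ.not_interlaced hjq hf (hΔ.interlaced_of_fan hjp (hfan' p q (by omega) (by omega)) hf h)
  have hqp : (q, p) ∈ Δ := hΔ.swap_mem hpq
  refine ⟨p, q, hjp, hjq, hpq, isCyclicSeq_four_iff_fst.mpr ⟨hp, hpk, hkq⟩,
    hΔ.crossingNumber_lt hjp (hfan' p k ⟨le_rfl, by omega⟩ ⟨by omega, by omega⟩) hpq ?_,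
    hΔ.crossingNumber_lt hjq (hfan' q k ⟨by omega, le_rfl⟩ ⟨by omega, by omega⟩) hqp ?_⟩
  all_goals rw [interlaced_comm, interlaced_iff]; omega

end Triangulation

section Angles

variable {R : Type*} [Ring R] {n : ℕ} (a : Fin n → Fin n → Rˣ)

def TriangleRel (i j k : Fin n) : Prop :=
  a i j * (a k j)⁻¹ * a k i = a i k * (a j k)⁻¹ * a j i

def ExchangeRel (i j k l : Fin n) : Prop :=
  (a j l : R) = a j k * ↑(a i k)⁻¹ * a i l + a j i * ↑(a k i)⁻¹ * a k l

/-- The noncommutative angle `Tang u x y` of the family `a`. -/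
def angle (u x y : Fin n) : Rˣ := (a x u)⁻¹ * a x y * (a u y)⁻¹

def AngleSymm (u x y : Fin n) : Prop := angle a u x y = angle a u y x

def AngleAdd (u x w y : Fin n) : Prop :=
  (angle a u x y : R) = angle a u x w + angle a u w y

variable {a}

lemma triangleRel_gauge_iff (g h : Fin n → Rˣ) {i j k : Fin n} :
    TriangleRel (fun x y => g x * a x y * h y) i j k ↔ TriangleRel a i j k := by
  have gauge (j k : Fin n) : g i * a i j * h j * (g k * a k j * h j)⁻¹ * (g k * a k i * h i) =
      g i * (a i j * (a k j)⁻¹ * a k i) * h i := by group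
  rw [TriangleRel, TriangleRel, gauge, gauge, mul_left_inj, mul_right_inj]

lemma exchangeRel_gauge_iff (g h : Fin n → Rˣ) {i j k l : Fin n} :
    ExchangeRel (fun x y => g x * a x y * h y) i j k l ↔ ExchangeRel a i j k l := by
  have gauge (i k : Fin n) : ((g j * a j k * h k : Rˣ) : R) * ↑(g i * a i k * h k)⁻¹ *
      ↑(g i * a i l * h l) = g j * (a j k * ↑(a i k)⁻¹ * a i l) * h l := by
    simp only [mul_inv_rev, Units.val_mul, mul_assoc, Units.mul_inv_cancel_left,
      Units.inv_mul_cancel_left]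
  rw [ExchangeRel, ExchangeRel, gauge, gauge, ← add_mul, ← mul_add, Units.val_mul, Units.val_mul,
    Units.mul_left_inj, Units.mul_right_inj]

lemma angleSymm_iff_triangleRel {i j k : Fin n} : AngleSymm a i j k ↔ TriangleRel a i j k := by
  rw [AngleSymm, TriangleRel, angle, angle, ← inv_inj, eq_comm]
  simp only [mul_inv_rev, inv_inv, mul_assoc]

lemma angleAdd_iff_exchangeRel {i j k l : Fin n} : AngleAdd a i j k l ↔ ExchangeRel a i j k l := by
  have expand : (angle a i j k : R) + angle a i k l =
      ↑(a j i)⁻¹ * (a j k * ↑(a i k)⁻¹ * a i l + a j i * ↑(a k i)⁻¹ * a k l) * ↑(a i l)⁻¹ := by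
    simp only [angle, Units.val_mul, mul_add, add_mul, mul_assoc, Units.mul_inv,
      Units.inv_mul_cancel_left, mul_one]
  rw [AngleAdd, ExchangeRel, expand, angle, Units.val_mul, Units.val_mul, Units.mul_left_inj,
    Units.mul_right_inj]

lemma AngleSymm.swap {u x y : Fin n} (h : AngleSymm a u x y) : AngleSymm a u y x := Eq.symm h

lemma AngleSymm.rotate {u x y : Fin n} (h : AngleSymm a u x y) : AngleSymm a x y u := by
  rw [angleSymm_iff_triangleRel, TriangleRel] at h ⊢
  calc a x y * (a u y)⁻¹ * a u x = a x u * (a u y * (a x y)⁻¹ * a x u)⁻¹ * a u x := by group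
    _ = a x u * (a y u)⁻¹ * a y x := by rw [← h]; group

lemma angleSymm_self (u y : Fin n) : AngleSymm a u u y := by
  simp [AngleSymm, angle]

lemma angleAdd_comm {i j k l : Fin n} : AngleAdd a i j k l ↔ AngleAdd a k j i l := by
  rw [angleAdd_iff_exchangeRel, angleAdd_iff_exchangeRel, ExchangeRel, ExchangeRel, add_comm]

lemma AngleAdd.reverse {u x w y : Fin n} (hxw : AngleSymm a u x w) (hwy : AngleSymm a u w y)
    (hxy : AngleSymm a u x y) (h : AngleAdd a u x w y) : AngleAdd a u y w x := by
  unfold AngleAdd at h ⊢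
  unfold AngleSymm at hxw hwy hxy
  rw [← hxy, h, hxw, hwy, add_comm]

lemma _root_.Units.mul_inv_mul_comm_of_val_eq_add {α β γ : Rˣ} (h : (β : R) = α + γ) :
    α * γ⁻¹ * β = β * γ⁻¹ * α := by
  ext
  simp only [Units.val_mul, h, mul_add, add_mul, mul_assoc, Units.inv_mul,
    Units.mul_inv_cancel_left, mul_one]

lemma AngleSymm.of_angleAdd (w : Fin n) {x y z : Fin n} (hxy : AngleSymm a w x y)
    (hxz : AngleSymm a w x z) (hyz : AngleSymm a w y z) (h : AngleAdd a w x y z) :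
    AngleSymm a x y z := by
  rw [angleSymm_iff_triangleRel, ← triangleRel_gauge_iff (fun x => (a x w)⁻¹) fun y => (a w y)⁻¹]
  change angle a w x y * (angle a w z y)⁻¹ * angle a w z x =
    angle a w x z * (angle a w y z)⁻¹ * angle a w y x
  unfold AngleSymm at hxy hxz hyz
  rw [← hxy, ← hxz, ← hyz]
  exact Units.mul_inv_mul_comm_of_val_eq_add h

lemma AngleAdd.cocycle_iff {u x y w z : Fin n} (hxyw : AngleAdd a u x y w)
    (hywz : AngleAdd a u y w z) : AngleAdd a u x y z ↔ AngleAdd a u x w z := by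
  unfold AngleAdd at *
  rw [hxyw, hywz, add_assoc]

lemma AngleAdd.flip {A B C D : Fin n} (h : AngleAdd a D A B C) (hA : AngleSymm a B A C)
    (hD : AngleSymm a B D C) : AngleAdd a A B C D := by
  rw [angleAdd_iff_exchangeRel, ExchangeRel] at h ⊢
  unfold AngleSymm angle at hA hD
  have h1 := congrArg (fun z : R => z * (↑(a B C)⁻¹ * ↑(a B D))) h
  simp only [add_mul, mul_assoc, Units.mul_inv_cancel_left, Units.inv_mul, mul_one] at h1
  have h2 : (a A D : R) = ↑(a A C) * (↑(a B C)⁻¹ * ↑(a B D))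
      - ↑(a A B) * (↑(a D B)⁻¹ * (↑(a D C) * (↑(a B C)⁻¹ * ↑(a B D)))) := by
    rw [h1]; abel
  have hD' := congrArg (fun z : Rˣ => ((z * a B D : Rˣ) : R)) hD
  simp only [Units.val_mul, mul_assoc, Units.inv_mul, mul_one] at hD'
  have hA' := congrArg (fun z : Rˣ => ((z⁻¹ * ((a C B)⁻¹ * a C D) : Rˣ) : R)) hA
  simp only [mul_inv_rev, inv_inv, Units.val_mul, mul_assoc, Units.mul_inv_cancel_left] at hA'
  rw [h2]
  simp only [mul_sub, mul_assoc, Units.inv_mul_cancel_left, Units.mul_inv_cancel_left]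
  rw [hD', ← hA']
  abel

/-- The exchange relation is invariant under the gauge change `a ↦ angle a p`, which turns it
into an identity among angles at `p`. -/
lemma AngleAdd.of_pivot {p j x k y : Fin n} (hxky : AngleAdd a p x k y) (hkyj : AngleAdd a p k y j)
    (hxkj : AngleAdd a p x k j) (hjk : AngleSymm a p j k) (hjy : AngleSymm a p j y) :
    AngleAdd a j x k y := by
  rw [angleAdd_iff_exchangeRel, ← exchangeRel_gauge_iff (fun x => (a x p)⁻¹) fun y => (a p y)⁻¹]
  change (angle a p x y : R) = angle a p x k * ↑(angle a p j k)⁻¹ * angle a p j y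
    + angle a p x j * ↑(angle a p k j)⁻¹ * angle a p k y
  unfold AngleAdd at hxky hkyj hxkj
  unfold AngleSymm at hjk hjy
  rw [hjk, hjy, hxky, hxkj]
  calc (angle a p x k : R) + angle a p k y
      = angle a p x k * ↑(angle a p k j)⁻¹ * (angle a p k y + angle a p y j) + angle a p k y := by
        rw [← hkyj, Units.inv_mul_cancel_right]
    _ = _ := by
        simp only [mul_add, add_mul, mul_assoc, Units.mul_inv_cancel_left]
        abel

end Angles

section Propagation

variable {R : Type*} [Ring R] {n : ℕ}

/-- In angle form, the triangle relations with side `(j, k)` and the exchange relations with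
diagonal `(j, k)`. -/
def ChordRelations (a : Fin n → Fin n → Rˣ) (j k : Fin n) : Prop :=
  (∀ v, AngleSymm a v j k) ∧ ∀ x y, IsCyclicSeq [j, x, k, y] → AngleAdd a j x k y

structure QuadRelations (a : Fin n → Fin n → Rˣ) (j p k q : Fin n) : Prop where
  cyc : IsCyclicSeq [j, p, k, q]
  jp : ChordRelations a j p
  pj : ChordRelations a p j
  jq : ChordRelations a j q
  qj : ChordRelations a q j
  pq : ChordRelations a p q
  qp : ChordRelations a q p
  pk : ChordRelations a p k
  kp : ChordRelations a k p
  qk : ChordRelations a q k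
  kq : ChordRelations a k q

namespace QuadRelations

variable {a : Fin n → Fin n → Rˣ} {j p k q : Fin n}

lemma angleSymm (h : QuadRelations a j p k q) (v : Fin n) : AngleSymm a v j k := by
  obtain ⟨hp, hpk, hkq⟩ := isCyclicSeq_four_iff_fst.mp h.cyc
  have := cycPos_self j; have := cycPos_lt j q; have := cycPos_lt j v
  have hpkj : AngleSymm a p k j := (h.jp.1 k).rotate.rotate
  have hqkj : AngleSymm a q k j := (h.jq.1 k).rotate.rotate
  rcases lt_trichotomy (cycPos j v) (cycPos j p) with hv | hv | hv
  · obtain rfl | hv0 := eq_or_ne v j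
    · exact angleSymm_self v k
    have := cycPos_eq_zero_iff.not.mpr hv0
    have hadd := h.pj.2 k v ((isCyclicSeq_four_iff j).mpr (by omega))
    exact (AngleSymm.of_angleAdd p hpkj (h.pk.1 v).rotate (h.jp.1 v).rotate.rotate.swap
      hadd).rotate.rotate.swap
  · rw [cycPos_injective j hv]
    exact hpkj.swap
  rcases lt_trichotomy (cycPos j v) (cycPos j k) with hv' | hv' | hv'
  · have hadd := h.pk.2 v j ((isCyclicSeq_four_iff j).mpr (by omega))
    exact (AngleSymm.of_angleAdd p (h.pk.1 v).rotate.swap (h.jp.1 v).rotate.rotate hpkj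
      hadd).swap
  · rw [cycPos_injective j hv']
    exact (angleSymm_self k j).swap
  rcases lt_trichotomy (cycPos j v) (cycPos j q) with hv'' | hv'' | hv''
  · have hadd := h.qk.2 j v ((isCyclicSeq_four_iff j).mpr (by omega))
    exact (AngleSymm.of_angleAdd q hqkj.swap (h.jq.1 v).rotate.rotate.swap (h.qk.1 v).rotate
      hadd).rotate.rotate
  · rw [cycPos_injective j hv'']
    exact hqkj.swap
  · have hadd := h.qj.2 v k ((isCyclicSeq_four_iff j).mpr (by omega))
    exact AngleSymm.of_angleAdd q (h.jq.1 v).rotate.rotate (h.qk.1 v).rotate.swap hqkj.swap hadd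

lemma angleAdd_jpkq (h : QuadRelations a j p k q) : AngleAdd a j p k q :=
  AngleAdd.flip (h.qp.2 j k (isCyclicSeq_rotate.mp h.cyc)) (h.angleSymm p) (h.pq.1 k).rotate

lemma angleAdd_kqjp (h : QuadRelations a j p k q) : AngleAdd a k q j p :=
  AngleAdd.flip (h.pq.2 k j (isCyclicSeq_rotate.mpr h.cyc)) (h.angleSymm q).swap
    (h.pq.1 j).rotate.rotate.swap

lemma angleAdd_of_between_p_k (h : QuadRelations a j p k q) {z : Fin n}
    (hz : IsCyclicSeq [j, p, z, k]) : AngleAdd a j z k q := by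
  obtain ⟨hp, hpk, hkq⟩ := isCyclicSeq_four_iff_fst.mp h.cyc
  obtain ⟨-, hpz, hzk⟩ := isCyclicSeq_four_iff_fst.mp hz
  have := cycPos_self j; have := cycPos_lt j q
  have hkqpz := h.kp.2 q z ((isCyclicSeq_four_iff j).mpr (by omega))
  have hkjpz := h.kp.2 j z ((isCyclicSeq_four_iff j).mpr (by omega))
  have hkqjz := (AngleAdd.cocycle_iff h.angleAdd_kqjp hkjpz).mpr hkqpz
  exact (angleAdd_comm.mp hkqjz).reverse (h.jq.1 k).rotate (h.angleSymm z).rotate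
    (h.jq.1 z).rotate

lemma angleAdd_of_between_k_q (h : QuadRelations a j p k q) {z : Fin n}
    (hz : IsCyclicSeq [j, k, z, q]) : AngleAdd a j p k z := by
  obtain ⟨hp, hpk, hkq⟩ := isCyclicSeq_four_iff_fst.mp h.cyc
  obtain ⟨-, hkz, hzq⟩ := isCyclicSeq_four_iff_fst.mp hz
  have := cycPos_self j; have := cycPos_lt j q
  have hkzqp := h.kq.2 z p ((isCyclicSeq_four_iff j).mpr (by omega))
  have hkzqj := h.kq.2 z j ((isCyclicSeq_four_iff j).mpr (by omega))
  have hkzjp := (AngleAdd.cocycle_iff hkzqj h.angleAdd_kqjp).mp hkzqp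
  exact (angleAdd_comm.mp hkzjp).reverse (h.angleSymm z).rotate.swap (h.jp.1 k).rotate.swap
    (h.jp.1 z).rotate.swap

lemma angleAdd_inner (h : QuadRelations a j p k q) {x y : Fin n}
    (hx : IsCyclicSeq [j, p, x, k]) (hy : IsCyclicSeq [j, k, y, q]) : AngleAdd a j x k y := by
  obtain ⟨hp, hpk, hkq⟩ := isCyclicSeq_four_iff_fst.mp h.cyc
  obtain ⟨-, hpx, hxk⟩ := isCyclicSeq_four_iff_fst.mp hx
  obtain ⟨-, hky, hyq⟩ := isCyclicSeq_four_iff_fst.mp hy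
  have := cycPos_self j; have := cycPos_lt j q
  have hpkyq : AngleAdd a p k y q :=
    AngleAdd.flip (h.qk.2 p y ((isCyclicSeq_four_iff j).mpr (by omega)))
      (h.pk.1 y).rotate.rotate.swap (h.qk.1 y).rotate.rotate.swap
  have hpyqj := h.pq.2 y j ((isCyclicSeq_four_iff j).mpr (by omega))
  have hpkqj := h.pq.2 k j ((isCyclicSeq_four_iff j).mpr (by omega))
  exact AngleAdd.of_pivot (h.pk.2 x y ((isCyclicSeq_four_iff j).mpr (by omega)))
    ((AngleAdd.cocycle_iff hpkyq hpyqj).mpr hpkqj)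
    (h.pk.2 x j ((isCyclicSeq_four_iff j).mpr (by omega)))
    (h.angleSymm p) (h.jp.1 y).rotate.rotate.swap

lemma angleAdd (h : QuadRelations a j p k q) {x y : Fin n} (hxy : IsCyclicSeq [j, x, k, y]) :
    AngleAdd a j x k y := by
  obtain ⟨hp, hpk, hkq⟩ := isCyclicSeq_four_iff_fst.mp h.cyc
  have := cycPos_self j; have := cycPos_lt j q
  have inner (x y : Fin n) (hx : cycPos j p ≤ cycPos j x ∧ cycPos j x < cycPos j k)
      (hy : cycPos j k < cycPos j y ∧ cycPos j y ≤ cycPos j q) : AngleAdd a j x k y := by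
    rcases hx.1.lt_or_eq with hx' | hx' <;> rcases hy.2.lt_or_eq with hy' | hy'
    · exact h.angleAdd_inner ((isCyclicSeq_four_iff j).mpr (by omega))
        ((isCyclicSeq_four_iff j).mpr (by omega))
    · rw [cycPos_injective j hy']
      exact h.angleAdd_of_between_p_k ((isCyclicSeq_four_iff j).mpr (by omega))
    · rw [← cycPos_injective j hx']
      exact h.angleAdd_of_between_k_q ((isCyclicSeq_four_iff j).mpr (by omega))
    · rw [← cycPos_injective j hx', cycPos_injective j hy']
      exact h.angleAdd_jpkq
  -- additivity along the edges `(j, p)` and `(j, q)` of `Δ` reduces to `x ∈ [p, k)`, `y ∈ (k, q]`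
  have right (x y : Fin n) (hx : cycPos j p ≤ cycPos j x ∧ cycPos j x < cycPos j k)
      (hy : cycPos j k < cycPos j y) : AngleAdd a j x k y := by
    have := cycPos_lt j y
    rcases le_or_gt (cycPos j y) (cycPos j q) with hyq | hyq
    · exact inner x y hx ⟨hy, hyq⟩
    · exact (AngleAdd.cocycle_iff (inner x q hx ⟨hkq, le_rfl⟩)
        (h.jq.2 k y ((isCyclicSeq_four_iff j).mpr (by omega)))).mpr
        (h.jq.2 x y ((isCyclicSeq_four_iff j).mpr (by omega)))
  obtain ⟨hx, hxk, hky⟩ := isCyclicSeq_four_iff_fst.mp hxy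
  rcases le_or_gt (cycPos j p) (cycPos j x) with hpx | hpx
  · exact right x y ⟨hpx, hxk⟩ hky
  · have := cycPos_lt j y
    exact (AngleAdd.cocycle_iff (h.jp.2 x k ((isCyclicSeq_four_iff j).mpr (by omega)))
      (right p y ⟨le_rfl, hpk⟩ hky)).mp (h.jp.2 x y ((isCyclicSeq_four_iff j).mpr (by omega)))

lemma chordRelations (h : QuadRelations a j p k q) : ChordRelations a j k :=
  ⟨h.angleSymm, fun _ _ => h.angleAdd⟩

end QuadRelations

variable {a : Fin n → Fin n → Rˣ} {Δ : Set (Fin n × Fin n)}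

theorem IsTriangulation.chordRelations (hΔ : IsTriangulation Δ)
    (hbase : ∀ e ∈ Δ, ChordRelations a e.1 e.2) {j k : Fin n} (hjk : j ≠ k) :
    ChordRelations a j k := by
  induction hμ : crossingNumber Δ (j, k) using Nat.strong_induction_on generalizing j k with
  | _ m ih =>
  by_cases hk : (j, k) ∈ Δ
  · exact hbase _ hk
  obtain ⟨p, q, hjp, hjq, hpq, hcyc, hp, hq⟩ := hΔ.exists_anchor hjk hk
  obtain ⟨-, hpk, hkq⟩ := isCyclicSeq_four_iff_fst.mp hcyc
  have both {b : Fin n} (hbk : cycPos j b ≠ cycPos j k)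
      (hb : crossingNumber Δ (b, k) < crossingNumber Δ (j, k)) :
      ChordRelations a b k ∧ ChordRelations a k b :=
    ⟨ih _ (hμ ▸ hb) (ne_of_apply_ne _ hbk) rfl,
      ih _ (hμ ▸ crossingNumber_swap (b, k) ▸ hb) (ne_of_apply_ne _ hbk).symm rfl⟩
  obtain ⟨hpk', hkp'⟩ := both hpk.ne hp
  obtain ⟨hqk', hkq'⟩ := both hkq.ne' hq
  exact QuadRelations.chordRelations ⟨hcyc, hbase _ hjp, hbase _ (hΔ.swap_mem hjp), hbase _ hjq,
    hbase _ (hΔ.swap_mem hjq), hbase _ hpq, hbase _ (hΔ.swap_mem hpq), hpk', hkp', hqk', hkq'⟩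

lemma IsTriangulation.angleSymm (hΔ : IsTriangulation Δ)
    (hbase : ∀ e ∈ Δ, ChordRelations a e.1 e.2) (i j k : Fin n) : AngleSymm a i j k := by
  obtain rfl | hjk := eq_or_ne j k
  · rfl
  · exact (hΔ.chordRelations hbase hjk).1 i

lemma IsTriangulation.angleAdd (hΔ : IsTriangulation Δ)
    (hbase : ∀ e ∈ Δ, ChordRelations a e.1 e.2) {i j k l : Fin n}
    (h : IsCyclicSeq [i, j, k, l]) : AngleAdd a i j k l := by
  obtain ⟨-, hik, -⟩ := isCyclicSeq_four_iff_fst.mp h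
  exact (hΔ.chordRelations hbase (ne_of_apply_ne (cycPos i) (by rw [cycPos_self]; omega))).2 j l h

end Propagation

section UniversalProperty

variable {n : ℕ}

lemma X_self (i : Fin n) : X i i = 1 := by
  simp [X, xF]

lemma X_mul_Xinv {i j : Fin n} (h : i ≠ j) : X i j * Xinv i j = 1 := by
  simpa [X, Xinv] using RingQuot.mkAlgHom_rel ℚ (ARel.mul_inv h)

lemma Xinv_mul_X {i j : Fin n} (h : i ≠ j) : Xinv i j * X i j = 1 := by
  simpa [X, Xinv] using RingQuot.mkAlgHom_rel ℚ (ARel.inv_mul h)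

lemma isUnit_X {i j : Fin n} (h : i ≠ j) : IsUnit (X i j) :=
  ⟨⟨X i j, Xinv i j, X_mul_Xinv h, Xinv_mul_X h⟩, rfl⟩

lemma X_triangle {i j k : Fin n} (hij : i ≠ j) (hik : i ≠ k) (hjk : j ≠ k) :
    X i j * Xinv k j * X k i = X i k * Xinv j k * X j i := by
  simpa [X, Xinv] using RingQuot.mkAlgHom_rel ℚ (ARel.triangle hij hik hjk)

lemma X_exchange {i j k l : Fin n} (h : IsCyclicSeq [i, j, k, l]) :
    X j l = X j k * Xinv i k * X i l + X j i * Xinv k i * X k l := by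
  simpa [X, Xinv] using RingQuot.mkAlgHom_rel ℚ (ARel.exchange h)

variable {B : Type*} [Ring B] [Algebra ℚ B]

lemma exists_algHom_X_eq (a : Fin n → Fin n → Bˣ)
    (htri : ∀ i j k, i ≠ j → i ≠ k → j ≠ k → TriangleRel a i j k)
    (hexch : ∀ i j k l, IsCyclicSeq [i, j, k, l] → ExchangeRel a i j k l) :
    ∃ ψ : NCPoly n →ₐ[ℚ] B, ∀ i j, i ≠ j → ψ (X i j) = a i j := by
  let F : FreeAlgebra ℚ (AGen n) →ₐ[ℚ] B :=
    FreeAlgebra.lift ℚ (Sum.elim (fun e => (a e.1.1 e.1.2 : B)) fun e => ↑(a e.1.1 e.1.2)⁻¹)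
  have hx {i j : Fin n} (h : i ≠ j) : F (xF i j) = a i j := by simp [F, xF, h]
  have hxi {i j : Fin n} (h : i ≠ j) : F (xiF i j) = ↑(a i j)⁻¹ := by simp [F, xiF, h]
  have hF : ∀ ⦃x y⦄, ARel n x y → F x = F y := by
    intro x y hrel
    induction hrel with
    | mul_inv h => simp [hx h, hxi h]
    | inv_mul h => simp [hx h, hxi h]
    | triangle hij hik hjk =>
      simpa [hx, hxi, hij, hik, hjk, hij.symm, hik.symm, hjk.symm] using
        congrArg Units.val (htri _ _ _ hij hik hjk)
    | exchange h =>
      have hnd := h.1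
      simp only [List.nodup_cons, List.mem_cons, List.not_mem_nil, or_false, not_or,
        List.nodup_nil, and_true] at hnd
      obtain ⟨⟨hij, hik, hil⟩, ⟨hjk, hjl⟩, hkl⟩ := hnd
      simpa [hx, hxi, hij, hik, hil, hjk, hjl, hkl, Ne.symm hij, Ne.symm hik, ExchangeRel] using
        hexch _ _ _ _ h
  refine ⟨RingQuot.liftAlgHom ℚ ⟨F, hF⟩, fun i j h => ?_⟩
  rw [X, RingQuot.liftAlgHom_mkAlgHom_apply, hx h]

lemma algHom_ext {ψ₁ ψ₂ : NCPoly n →ₐ[ℚ] B} (h : ∀ i j, i ≠ j → ψ₁ (X i j) = ψ₂ (X i j)) :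
    ψ₁ = ψ₂ := by
  refine RingQuot.ringQuot_ext' _ _ _ (FreeAlgebra.hom_ext (funext fun g => ?_))
  obtain ⟨⟨i, j⟩, hij⟩ | ⟨⟨i, j⟩, hij⟩ := g
  · have : RingQuot.mkAlgHom ℚ (ARel n) (FreeAlgebra.ι ℚ (.inl ⟨(i, j), hij⟩)) = X i j := by
      simp [X, xF, hij]
    simpa [this] using h i j hij
  · have : RingQuot.mkAlgHom ℚ (ARel n) (FreeAlgebra.ι ℚ (.inr ⟨(i, j), hij⟩)) = Xinv i j := by
      simp [Xinv, xiF, hij]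
    simp only [Function.comp_apply, AlgHom.comp_apply, this]
    refine left_inv_eq_right_inv (a := ψ₁ (X i j)) ?_ ?_
    · rw [← map_mul, Xinv_mul_X hij, map_one]
    · rw [h i j hij, ← map_mul, X_mul_Xinv hij, map_one]

end UniversalProperty

section Localization

variable {n : ℕ} {Δ : Set (Fin n × Fin n)}

lemma X_mem_ADelta (Δ : Set (Fin n × Fin n)) (i j : Fin n) : X i j ∈ ADelta n Δ := by
  obtain rfl | h := eq_or_ne i j
  · rw [X_self]; exact one_mem _
  · exact Algebra.subset_adjoin (Or.inl ⟨i, j, h, rfl⟩)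

lemma Xinv_mem_ADelta {i j : Fin n} (h : (i, j) ∈ Δ) : Xinv i j ∈ ADelta n Δ :=
  Algebra.subset_adjoin (Or.inr ⟨(i, j), h, rfl⟩)

def ADelta.ofX (Δ : Set (Fin n × Fin n)) (i j : Fin n) : ADelta n Δ := ⟨X i j, X_mem_ADelta Δ i j⟩

def ADelta.ofXinv {i j : Fin n} (h : (i, j) ∈ Δ) : ADelta n Δ := ⟨Xinv i j, Xinv_mem_ADelta h⟩

lemma IsTriangulation.ofX_mul_ofXinv (hΔ : IsTriangulation Δ) {i j : Fin n} (h : (i, j) ∈ Δ) :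
    ADelta.ofX Δ i j * ADelta.ofXinv h = 1 :=
  Subtype.ext (X_mul_Xinv (hΔ.fst_ne_snd h))

variable {B : Type*} [Ring B] [Algebra ℚ B]

lemma IsTriangulation.map_ofXinv (hΔ : IsTriangulation Δ) (φ : ADelta n Δ →ₐ[ℚ] B)
    {a : Fin n → Fin n → Bˣ} (ha : ∀ i j, (a i j : B) = φ (ADelta.ofX Δ i j)) {i j : Fin n}
    (h : (i, j) ∈ Δ) : φ (ADelta.ofXinv h) = ↑(a i j)⁻¹ :=
  Units.eq_inv_of_mul_eq_one_left (by rw [ha, ← map_mul, hΔ.ofX_mul_ofXinv, map_one])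

lemma IsTriangulation.chordRelations_of_algHom (hΔ : IsTriangulation Δ)
    (φ : ADelta n Δ →ₐ[ℚ] B) {a : Fin n → Fin n → Bˣ}
    (ha : ∀ i j, (a i j : B) = φ (ADelta.ofX Δ i j)) {e : Fin n × Fin n} (he : e ∈ Δ) :
    ChordRelations a e.1 e.2 := by
  obtain ⟨j, k⟩ := e
  have hjk : j ≠ k := hΔ.fst_ne_snd he
  have hkj : (k, j) ∈ Δ := hΔ.swap_mem he
  have hinv {i l : Fin n} (h : (i, l) ∈ Δ) := hΔ.map_ofXinv φ ha h
  refine ⟨fun v => ?_, fun x y hcyc => ?_⟩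
  · obtain rfl | hvj := eq_or_ne v j
    · exact angleSymm_self v k
    obtain rfl | hvk := eq_or_ne v k
    · exact (angleSymm_self v j).swap
    rw [angleSymm_iff_triangleRel, TriangleRel, Units.ext_iff]
    simp only [Units.val_mul, ha, ← hinv he, ← hinv hkj, ← map_mul]
    exact congrArg φ (Subtype.ext (X_triangle hvj hvk hjk))
  · rw [angleAdd_iff_exchangeRel, ExchangeRel]
    simp only [ha, ← hinv he, ← hinv hkj, ← map_mul, ← map_add]
    exact congrArg φ (Subtype.ext (X_exchange (i := j) (k := k) hcyc))

lemma IsTriangulation.exists_algHom_comp_val_eq (hΔ : IsTriangulation Δ)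
    (φ : ADelta n Δ →ₐ[ℚ] B) (hφ : ∀ i j, i ≠ j → IsUnit (φ (ADelta.ofX Δ i j))) :
    ∃ ψ : NCPoly n →ₐ[ℚ] B, ψ.comp (ADelta n Δ).val = φ := by
  have hunit (i j : Fin n) : IsUnit (φ (ADelta.ofX Δ i j)) := by
    obtain rfl | hij := eq_or_ne i j
    · rw [show ADelta.ofX Δ i i = 1 from Subtype.ext (X_self i), map_one]
      exact isUnit_one
    · exact hφ i j hij
  let a (i j : Fin n) : Bˣ := (hunit i j).unit
  have ha (i j : Fin n) : (a i j : B) = φ (ADelta.ofX Δ i j) := (hunit i j).unit_spec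
  have hbase (e) (he : e ∈ Δ) := hΔ.chordRelations_of_algHom φ ha he
  obtain ⟨ψ, hψ⟩ := exists_algHom_X_eq a
    (fun i j k _ _ _ => angleSymm_iff_triangleRel.mp (hΔ.angleSymm hbase i j k))
    (fun _ _ _ _ h => angleAdd_iff_exchangeRel.mp (hΔ.angleAdd hbase h))
  refine ⟨ψ, AlgHom.adjoin_ext ?_⟩
  rintro _ (⟨i, j, hij, rfl⟩ | ⟨⟨i, j⟩, he, rfl⟩)
  · exact (hψ i j hij).trans (ha i j)
  · have hij : i ≠ j := hΔ.fst_ne_snd he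
    show ψ (Xinv i j) = φ (ADelta.ofXinv he)
    rw [hΔ.map_ofXinv φ ha he]
    exact Units.eq_inv_of_mul_eq_one_left (by rw [← hψ i j hij, ← map_mul, X_mul_Xinv hij, map_one])

end Localization

theorem An_is_universal_localization_general (n : ℕ) (Δ : Set (Fin n × Fin n))
    (hΔ : IsTriangulation Δ) :
    (∀ s ∈ Submonoid.closure
        {a : ADelta n Δ | ∃ i j : Fin n, i ≠ j ∧ (a : NCPoly n) = X i j},
      IsUnit (s : NCPoly n)) ∧
    ∀ (B : Type u) [Ring B] [Algebra ℚ B] (φ : ADelta n Δ →ₐ[ℚ] B),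
      (∀ s ∈ Submonoid.closure
          {a : ADelta n Δ | ∃ i j : Fin n, i ≠ j ∧ (a : NCPoly n) = X i j},
        IsUnit (φ s)) →
      ∃! ψ : NCPoly n →ₐ[ℚ] B, ∀ a : ADelta n Δ, ψ ↑a = φ a := by
  refine ⟨fun s hs => ?_, fun B _ _ φ hφ => ?_⟩
  · refine (Submonoid.closure_le (S := (IsUnit.submonoid _).comap (ADelta n Δ).val)).mpr ?_ hs
    rintro x ⟨i, j, hij, hx⟩
    exact (congrArg IsUnit hx).mpr (isUnit_X hij)
  obtain ⟨ψ, hψ⟩ := hΔ.exists_algHom_comp_val_eq φ fun i j hij =>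
    hφ _ (Submonoid.subset_closure ⟨i, j, hij, rfl⟩)
  refine ⟨ψ, DFunLike.congr_fun hψ, fun ψ' hψ' => algHom_ext fun i j _ => ?_⟩
  exact (hψ' (ADelta.ofX Δ i j)).trans (DFunLike.congr_fun hψ (ADelta.ofX Δ i j)).symm

/-- `𝒜_n` is the universal localization of `𝒜_Δ` by the multiplicative
submonoid `S` generated by all `x_{ij}`. -/
theorem An_is_universal_localization (n : ℕ) (hn : 2 ≤ n) (Δ : Set (Fin n × Fin n))
    (hΔ : IsTriangulation Δ) :
    (∀ s ∈ Submonoid.closure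
        {a : ADelta n Δ | ∃ i j : Fin n, i ≠ j ∧ (a : NCPoly n) = X i j},
      IsUnit (s : NCPoly n)) ∧
    ∀ (B : Type u) [Ring B] [Algebra ℚ B] (φ : ADelta n Δ →ₐ[ℚ] B),
      (∀ s ∈ Submonoid.closure
          {a : ADelta n Δ | ∃ i j : Fin n, i ≠ j ∧ (a : NCPoly n) = X i j},
        IsUnit (φ s)) →
      ∃! ψ : NCPoly n →ₐ[ℚ] B, ∀ a : ADelta n Δ, ψ ↑a = φ a :=
  An_is_universal_localization_general n Δ hΔ

end NCPolygon
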